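/- For a potential U satisfying the generalized Laplace equation ΔU = 2ω² (where ω is the rotation rate), the Eötvös matrix in the local frame of a rotationally symmetric field takes the form Eötvös(P) = [[U_xx, 0, 0], [0, |γ|² K_G/U_xx, −|γ| k_pl], [0, −|γ| k_pl, 2ω² − U_xx − |γ|² K_G/U_xx]], where |γ| = |∇U(P)|, K_G is the Gauss curvature of the level surface at P, and k_pl is the plumbline curvature at P. -/

import Mathlib

/-! The off-diagonal entries of the first row vanish by symmetry, and `K_G`, `k_pl` are the
entries `U_yy`, `U_yz` rescaled, so the only content is the last diagonal entry. It comes from the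
trace: for an orthonormal frame `Q` the Hessian `H` satisfies `∑ᵢ H(qᵢ, qᵢ) = tr (Q H Qᵀ) = tr H`,
which is `2ω²` by the generalized Laplace equation. Symmetry of the Hessian of a `C²` function
fills in the lower triangle. -/

open Real

/-- First directional (partial) derivative of `U` at `P` along `v`. -/
noncomputable def pd (U : (Fin 3 → ℝ) → ℝ) (P v : Fin 3 → ℝ) : ℝ := fderiv ℝ U P v

/-- Second directional derivative (Hessian bilinear form) of `U` at `P` along `v, w`. -/
noncomputable def pd2 (U : (Fin 3 → ℝ) → ℝ) (P v w : Fin 3 → ℝ) : ℝ :=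
  fderiv ℝ (fun p => fderiv ℝ U p w) P v

/-- Gradient vector of `U` at `P` (components are the partial derivatives). -/
noncomputable def gradv (U : (Fin 3 → ℝ) → ℝ) (P : Fin 3 → ℝ) : Fin 3 → ℝ :=
  fun i => fderiv ℝ U P (Pi.single i 1)

/-- Euclidean norm on `ℝ³`. -/
noncomputable def enorm3 (v : Fin 3 → ℝ) : ℝ := Real.sqrt (v 0 ^ 2 + v 1 ^ 2 + v 2 ^ 2)

/-- Euclidean dot product on `ℝ³`. -/
def dot3 (v w : Fin 3 → ℝ) : ℝ := v 0 * w 0 + v 1 * w 1 + v 2 * w 2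

/-- Cross product on `ℝ³`. -/
def cross3 (v w : Fin 3 → ℝ) : Fin 3 → ℝ :=
  ![v 1 * w 2 - v 2 * w 1, v 2 * w 0 - v 0 * w 2, v 0 * w 1 - v 1 * w 0]

/-- Standard basis vectors of `ℝ³`. -/
def e3 (i : Fin 3) : Fin 3 → ℝ := Pi.single i 1

open Matrix

theorem Matrix.sum_dotProduct_mulVec_self_of_mul_transpose_eq_one {ι R : Type*} [Fintype ι]
    [DecidableEq ι] [CommRing R] (Q M : Matrix ι ι R) (hQ : Q * Qᵀ = 1) :
    ∑ i, Q i ⬝ᵥ M *ᵥ Q i = M.trace := by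
  calc ∑ i, Q i ⬝ᵥ M *ᵥ Q i = (Q * M * Qᵀ).trace := by
        simp only [trace, diag, mul_apply, transpose_apply, dotProduct, mulVec, Finset.mul_sum,
          Finset.sum_mul]
        exact Finset.sum_congr rfl fun i _ =>
          Finset.sum_comm.trans (by simp only [mul_comm, mul_left_comm])
    _ = (Qᵀ * Q * M).trace := by rw [trace_mul_cycle]
    _ = M.trace := by rw [mul_eq_one_comm.mp hQ, Matrix.one_mul]

section BilinearForm

variable {𝕜 ι : Type*} [NontriviallyNormedField 𝕜] [Fintype ι] [DecidableEq ι]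
  (B : (ι → 𝕜) →L[𝕜] (ι → 𝕜) →L[𝕜] 𝕜)

theorem ContinuousLinearMap.apply_apply_eq_dotProduct_mulVec (v w : ι → 𝕜) :
    B v w = v ⬝ᵥ (Matrix.of fun j k => B (Pi.single j 1) (Pi.single k 1)) *ᵥ w :=
  (congrArg (fun f => f v w) ((LinearMap.toMatrix₂' 𝕜).symm_apply_apply
    ((ContinuousLinearMap.coeLM 𝕜).comp (B : (ι → 𝕜) →ₗ[𝕜] (ι → 𝕜) →L[𝕜] 𝕜)))).symm.trans
    (toLinearMap₂'_apply' _ _ _)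

theorem ContinuousLinearMap.sum_apply_self_of_mul_transpose_eq_one (Q : Matrix ι ι 𝕜)
    (hQ : Q * Qᵀ = 1) : ∑ i, B (Q i) (Q i) = ∑ j, B (Pi.single j 1) (Pi.single j 1) := by
  simp only [B.apply_apply_eq_dotProduct_mulVec (Q _)]
  exact sum_dotProduct_mulVec_self_of_mul_transpose_eq_one Q _ hQ

end BilinearForm

lemma dot3_eq_dotProduct (v w : Fin 3 → ℝ) : dot3 v w = v ⬝ᵥ w := by
  simp [dot3, dotProduct, Fin.sum_univ_three]

lemma enorm3_sq (v : Fin 3 → ℝ) : enorm3 v ^ 2 = dot3 v v := by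
  rw [enorm3, Real.sq_sqrt (by positivity), dot3]
  ring

lemma enorm3_ne_zero {v : Fin 3 → ℝ} (hv : v ≠ 0) : enorm3 v ≠ 0 := by
  intro h
  have : v ⬝ᵥ v = 0 := by rw [← dot3_eq_dotProduct, ← enorm3_sq, h, sq, zero_mul]
  exact hv (dotProduct_self_eq_zero.mp this)

lemma dot3_inv_enorm3_smul_self {v : Fin 3 → ℝ} (hv : v ≠ 0) :
    dot3 ((enorm3 v)⁻¹ • v) ((enorm3 v)⁻¹ • v) = 1 := by
  have h := enorm3_sq v
  simp only [dot3, Pi.smul_apply, smul_eq_mul] at h ⊢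
  field_simp [enorm3_ne_zero hv]
  linarith

lemma vec3_mul_transpose_eq_one {x y z : Fin 3 → ℝ}
    (hx : dot3 x x = 1) (hy : dot3 y y = 1) (hz : dot3 z z = 1)
    (hxy : dot3 x y = 0) (hxz : dot3 x z = 0) (hyz : dot3 y z = 0) :
    of ![x, y, z] * (of ![x, y, z])ᵀ = 1 := by
  simp only [dot3_eq_dotProduct] at *
  ext i j
  -- `of ![x, y, z] i` is not reduced by `simp`, so restate the entry through the rows
  change ![x, y, z] i ⬝ᵥ ![x, y, z] j = (1 : Matrix (Fin 3) (Fin 3) ℝ) i j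
  fin_cases i <;> fin_cases j <;> simp [dotProduct_comm, *]

section Hessian

variable {U : (Fin 3 → ℝ) → ℝ} {P : Fin 3 → ℝ}

lemma pd2_eq_fderiv_fderiv (hU : ContDiffAt ℝ 2 U P) (v w : Fin 3 → ℝ) :
    pd2 U P v w = fderiv ℝ (fderiv ℝ U) P v w := by
  have hd : DifferentiableAt ℝ (fderiv ℝ U) P :=
    (hU.fderiv_right (m := 1) le_rfl).differentiableAt one_ne_zero
  rw [pd2, fderiv_clm_apply hd (differentiableAt_const w)]
  simp

lemma pd2_comm (hU : ContDiffAt ℝ 2 U P) (v w : Fin 3 → ℝ) : pd2 U P v w = pd2 U P w v := by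
  simp only [pd2_eq_fderiv_fderiv hU]
  exact hU.isSymmSndFDerivAt (by simp) v w

lemma pd2_trace_of_orthonormal (hU : ContDiffAt ℝ 2 U P) {x y z : Fin 3 → ℝ}
    (hx : dot3 x x = 1) (hy : dot3 y y = 1) (hz : dot3 z z = 1)
    (hxy : dot3 x y = 0) (hxz : dot3 x z = 0) (hyz : dot3 y z = 0) :
    pd2 U P x x + pd2 U P y y + pd2 U P z z =
      pd2 U P (e3 0) (e3 0) + pd2 U P (e3 1) (e3 1) + pd2 U P (e3 2) (e3 2) := by
  have h := (fderiv ℝ (fderiv ℝ U) P).sum_apply_self_of_mul_transpose_eq_one _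
    (vec3_mul_transpose_eq_one hx hy hz hxy hxz hyz)
  rw [Fin.sum_univ_three, Fin.sum_univ_three] at h
  simp only [pd2_eq_fderiv_fderiv hU, e3]
  exact h

end Hessian

theorem stmt13_general (U : (Fin 3 → ℝ) → ℝ) (hU : ContDiff ℝ 2 U) (ω : ℝ) (P : Fin 3 → ℝ)
    (hLap : pd2 U P (e3 0) (e3 0) + pd2 U P (e3 1) (e3 1) + pd2 U P (e3 2) (e3 2)
      = 2 * ω ^ 2)
    (hg : gradv U P ≠ 0)
    (x y z : Fin 3 → ℝ)
    (hx : dot3 x x = 1) (hy : dot3 y y = 1) (hxy : dot3 x y = 0)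
    (hxz : dot3 x z = 0) (hyz : dot3 y z = 0)
    (hz : z = (enorm3 (gradv U P))⁻¹ • gradv U P)
    (hxx : pd2 U P x x ≠ 0)
    -- symmetry of the field
    (hUxy : pd2 U P x y = 0) (hUxz : pd2 U P x z = 0)
    (KG kpl : ℝ)
    (hKG : KG = pd2 U P x x * pd2 U P y y / (enorm3 (gradv U P)) ^ 2)
    (hkpl : kpl = -(pd2 U P y z) / enorm3 (gradv U P)) :
    let n := enorm3 (gradv U P)
    (!![pd2 U P x x, pd2 U P x y, pd2 U P x z;
        pd2 U P y x, pd2 U P y y, pd2 U P y z;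
        pd2 U P z x, pd2 U P z y, pd2 U P z z] : Matrix (Fin 3) (Fin 3) ℝ) =
    !![pd2 U P x x, 0, 0;
       0, n ^ 2 * KG / pd2 U P x x, -(n * kpl);
       0, -(n * kpl), 2 * ω ^ 2 - pd2 U P x x - n ^ 2 * KG / pd2 U P x x] := by
  dsimp only
  have hn : enorm3 (gradv U P) ≠ 0 := enorm3_ne_zero hg
  have hzz : dot3 z z = 1 := hz ▸ dot3_inv_enorm3_smul_self hg
  have htrace : pd2 U P x x + pd2 U P y y + pd2 U P z z = 2 * ω ^ 2 :=
    (pd2_trace_of_orthonormal hU.contDiffAt hx hy hzz hxy hxz hyz).trans hLap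
  have hUyy : pd2 U P y y = enorm3 (gradv U P) ^ 2 * KG / pd2 U P x x := by
    rw [hKG]; field_simp
  have hUyz : pd2 U P y z = -(enorm3 (gradv U P) * kpl) := by
    rw [hkpl]; field_simp
  have hUzz : pd2 U P z z = 2 * ω ^ 2 - pd2 U P x x - pd2 U P y y := by linarith
  have hcomm : ∀ v w, pd2 U P v w = pd2 U P w v := pd2_comm hU.contDiffAt
  ext i j
  fin_cases i <;> fin_cases j <;>
    simp [hcomm y x, hcomm z x, hcomm z y, hUxy, hUxz, hUyz, hUzz, hUyy]

/-- for a potential satisfying the generalized Laplace equation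
`ΔU = 2ω²`, the Eötvös matrix in the local frame of a rotationally symmetric field is
`[[U_xx, 0, 0], [0, |γ|² K_G/U_xx, -|γ| k_pl], [0, -|γ| k_pl, 2ω² - U_xx - |γ|² K_G/U_xx]]`. -/
theorem stmt13 (U : (Fin 3 → ℝ) → ℝ) (hU : ContDiff ℝ 2 U) (ω : ℝ) (P : Fin 3 → ℝ)
    (hLap : pd2 U P (e3 0) (e3 0) + pd2 U P (e3 1) (e3 1) + pd2 U P (e3 2) (e3 2)
      = 2 * ω ^ 2)
    (hg : gradv U P ≠ 0)
    (x y z : Fin 3 → ℝ)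
    (hx : dot3 x x = 1) (hy : dot3 y y = 1) (hxy : dot3 x y = 0)
    (hxz : dot3 x z = 0) (hyz : dot3 y z = 0)
    (hz : z = (enorm3 (gradv U P))⁻¹ • gradv U P)
    (hrh : cross3 x y = z)
    (hxx : pd2 U P x x ≠ 0)
    -- symmetry of the field
    (hUxy : pd2 U P x y = 0) (hUxz : pd2 U P x z = 0)
    (KG kpl : ℝ)
    (hKG : KG = pd2 U P x x * pd2 U P y y / (enorm3 (gradv U P)) ^ 2)
    (hkpl : kpl = -(pd2 U P y z) / enorm3 (gradv U P)) :
    let n := enorm3 (gradv U P)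
    (!![pd2 U P x x, pd2 U P x y, pd2 U P x z;
        pd2 U P y x, pd2 U P y y, pd2 U P y z;
        pd2 U P z x, pd2 U P z y, pd2 U P z z] : Matrix (Fin 3) (Fin 3) ℝ) =
    !![pd2 U P x x, 0, 0;
       0, n ^ 2 * KG / pd2 U P x x, -(n * kpl);
       0, -(n * kpl), 2 * ω ^ 2 - pd2 U P x x - n ^ 2 * KG / pd2 U P x x] :=
  stmt13_general U hU ω P hLap hg x y z hx hy hxy hxz hyz hz hxx hUxy hUxz KG kpl hKG hkpl
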